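/- arXiv:2503.22358 — 3 statements merged into one kernel-verified Lean document; each statement's English description precedes it below -/
import Mathlib

section
/- The matrix A with entries A(i,j) = (i+j)! for i,j in {0,...,n} is invertible over the rationals. -/
open Finset

lemma vand_sum (i j : ℕ) :
    ∑ k ∈ Finset.range (i + 1), i.choose k * j.choose k = (i + j).choose i := by
  rw [Nat.add_choose_eq, Finset.Nat.sum_antidiagonal_eq_sum_range_succ
    (fun a b => i.choose a * j.choose b), ← Finset.sum_range_reflect]
  refine Finset.sum_congr rfl fun k hk => ?_
  rw [Finset.mem_range] at hk
  have hk' : k ≤ i := Nat.lt_succ_iff.mp hk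
  simp only [Nat.add_sub_cancel]
  rw [Nat.choose_symm hk']

lemma vand_sum' (n i j : ℕ) (hi : i ≤ n) :
    ∑ k ∈ Finset.range (n + 1), i.choose k * j.choose k = (i + j).choose i := by
  rw [← vand_sum i j]
  symm
  apply Finset.sum_subset
  · intro x hx; rw [Finset.mem_range] at *; omega
  · intro x _ hx
    rw [Finset.mem_range, not_lt] at hx
    rw [Nat.choose_eq_zero_of_lt (by omega), Nat.zero_mul]

lemma key (n i j : ℕ) (hi : i ≤ n) :
    ∑ k ∈ Finset.range (n + 1),
      (i.factorial * i.choose k) * (j.factorial * j.choose k) = (i + j).factorial := by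
  have : ∑ k ∈ Finset.range (n + 1),
      (i.factorial * i.choose k) * (j.factorial * j.choose k)
      = i.factorial * j.factorial * ∑ k ∈ Finset.range (n + 1), i.choose k * j.choose k := by
    rw [Finset.mul_sum]; refine Finset.sum_congr rfl fun k _ => by ring
  rw [this, vand_sum' n i j hi,
    show (i + j).choose i = (i + j).choose j from by
      rw [← Nat.choose_symm (Nat.le_add_right i j), Nat.add_sub_cancel_left],
    ← Nat.add_choose_mul_factorial_mul_factorial i j]
  ring

/-- The matrix with entries `A(i,j) = (i+j)!` for `i,j ∈ {0,…,n}` is invertible over ℚ. -/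
theorem factorial_matrix_invertible (n : ℕ) :
    IsUnit (Matrix.of fun i j : Fin (n + 1) =>
      ((Nat.factorial (i.val + j.val) : ℚ))) := by
  set M : Matrix (Fin (n + 1)) (Fin (n + 1)) ℚ :=
    Matrix.of fun i k : Fin (n + 1) =>
      ((Nat.factorial i.val * Nat.choose i.val k.val : ℕ) : ℚ) with hM
  have hA : (Matrix.of fun i j : Fin (n + 1) =>
      ((Nat.factorial (i.val + j.val) : ℚ))) = M * M.transpose := by
    ext i j
    simp only [Matrix.mul_apply, Matrix.transpose_apply, hM, Matrix.of_apply]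
    rw [Fin.sum_univ_eq_sum_range
      (fun k => ((i.1.factorial * i.1.choose k : ℕ) : ℚ) * ((j.1.factorial * j.1.choose k : ℕ) : ℚ))]
    exact_mod_cast (key n i.1 j.1 (Nat.lt_succ_iff.mp i.isLt)).symm
  rw [hA]
  have hMu : IsUnit M := by
    rw [Matrix.isUnit_iff_isUnit_det]
    have hlt : M.BlockTriangular OrderDual.toDual := by
      intro i j hij
      have h2 : i < j := hij
      simp only [hM, Matrix.of_apply]
      rw [Nat.choose_eq_zero_of_lt (by exact_mod_cast h2)]
      simp
    rw [Matrix.det_of_lowerTriangular M hlt]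
    refine isUnit_iff_ne_zero.mpr (Finset.prod_ne_zero_iff.mpr fun i _ => ?_)
    simp only [hM, Matrix.of_apply, Nat.choose_self, Nat.mul_one]
    exact_mod_cast (Nat.factorial_pos i.1).ne'
  exact hMu.mul ((Matrix.isUnit_iff_isUnit_det _).mpr (by rwa [Matrix.det_transpose, ← Matrix.isUnit_iff_isUnit_det]))
end

section
/- The matrix A with entries A(i,j) = j!(n+i−j)!/(n+i+1)! for i,j in {0,...,n} is invertible over the rationals. -/
open Polynomial Matrix Finset

private lemma fact_cast_prod (m : ℕ) : ∀ i : ℕ,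
    ((m + i).factorial : ℚ) = (m.factorial : ℚ) * ∏ k ∈ Finset.range i, ((m : ℚ) + k + 1)
  | 0 => by simp
  | (i + 1) => by
    rw [← Nat.add_assoc, Nat.factorial_succ, Finset.prod_range_succ]
    push_cast
    rw [fact_cast_prod m i]
    ring

/-- The matrix with entries `A(i,j) = j!(n+i−j)!/(n+i+1)!` for `i,j ∈ {0,…,n}` is
invertible over ℚ. -/
theorem shapley_coef_matrix_invertible (n : ℕ) :
    IsUnit (Matrix.of fun i j : Fin (n + 1) =>
      ((Nat.factorial j.val : ℚ) * (Nat.factorial (n + i.val - j.val) : ℚ)) /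
        (Nat.factorial (n + i.val + 1) : ℚ)) := by
  set q : Fin (n + 1) → ℚ[X] := fun i => ∏ k ∈ Finset.range i.val, (X + C ((k : ℚ) + 1)) with hq
  have hmonic : ∀ i, (q i).Monic := fun i =>
    monic_prod_of_monic _ _ fun k _ => monic_X_add_C _
  have hdeg : ∀ i : Fin (n + 1), (q i).natDegree = i.val := by
    intro i
    rw [hq, Polynomial.natDegree_prod _ _ (fun k _ => (monic_X_add_C _).ne_zero)]
    simp only [Polynomial.natDegree_X_add_C, Finset.sum_const, Finset.card_range, smul_eq_mul,
      mul_one]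
  set v : Fin (n + 1) → ℚ := fun j => (n : ℚ) - (j : ℚ) with hv
  have hvinj : Function.Injective v := by
    intro a b hab
    have : (a : ℚ) = (b : ℚ) := by
      simp only [hv] at hab; linarith
    exact_mod_cast Fin.ext (by exact_mod_cast this)
  set E : Matrix (Fin (n + 1)) (Fin (n + 1)) ℚ :=
    Matrix.of (fun i j => ((q j).eval (v i))) with hE
  have hEdet : E.det ≠ 0 := by
    rw [hE, ← Matrix.det_eval_matrixOfPolynomials_eq_det_vandermonde v q hdeg hmonic]
    exact Matrix.det_vandermonde_ne_zero_iff.mpr hvinj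
  set r : Fin (n + 1) → ℚ := fun i => 1 / ((n + i.val + 1).factorial : ℚ) with hr
  set c : Fin (n + 1) → ℚ := fun j =>
    ((j.val.factorial : ℚ)) * ((n - j.val).factorial : ℚ) with hc
  have key : (Matrix.of fun i j : Fin (n + 1) =>
      ((Nat.factorial j.val : ℚ) * (Nat.factorial (n + i.val - j.val) : ℚ)) /
        (Nat.factorial (n + i.val + 1) : ℚ)) =
      Matrix.diagonal r * Eᵀ * Matrix.diagonal c := by
    ext i j
    simp only [Matrix.mul_diagonal, Matrix.diagonal_mul, Matrix.transpose_apply, hE,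
      Matrix.of_apply]
    have hj : j.val ≤ n := Nat.lt_succ_iff.mp j.isLt
    have h1 : n + i.val - j.val = (n - j.val) + i.val := by omega
    have h2 : (((n - j.val) + i.val).factorial : ℚ) =
        ((n - j.val).factorial : ℚ) * ∏ k ∈ Finset.range i.val, (((n - j.val : ℕ) : ℚ) + k + 1) :=
      fact_cast_prod _ _
    have h3 : (q i).eval (v j) = ∏ k ∈ Finset.range i.val, (((n - j.val : ℕ) : ℚ) + k + 1) := by
      rw [hq]
      simp only [Polynomial.eval_prod, Polynomial.eval_add, Polynomial.eval_X,
        Polynomial.eval_C, hv]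
      refine Finset.prod_congr rfl fun k _ => ?_
      have : ((n - j.val : ℕ) : ℚ) = (n : ℚ) - (j.val : ℚ) := by
        push_cast [hj]; ring
      rw [this]; ring
    rw [h1, h2, ← h3, hr, hc]
    have hfne : ((n + i.val + 1).factorial : ℚ) ≠ 0 := by
      exact_mod_cast Nat.factorial_ne_zero _
    field_simp
  rw [key]
  refine (IsUnit.mul (IsUnit.mul ?_ ?_) ?_)
  · rw [Matrix.isUnit_iff_isUnit_det, Matrix.det_diagonal, isUnit_iff_ne_zero]
    refine Finset.prod_ne_zero_iff.mpr fun i _ => ?_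
    simp only [hr, one_div, ne_eq, inv_eq_zero]
    exact_mod_cast Nat.factorial_ne_zero _
  · rw [Matrix.isUnit_iff_isUnit_det, Matrix.det_transpose, isUnit_iff_ne_zero]
    exact hEdet
  · rw [Matrix.isUnit_iff_isUnit_det, Matrix.det_diagonal, isUnit_iff_ne_zero]
    refine Finset.prod_ne_zero_iff.mpr fun j _ => ?_
    simp only [hc]
    positivity
end

section
/- Let N be a finite set, η : N → N a permutation with η(β) = α, and v : 2^N → ℝ a game such that (a) for every S ⊆ N\{β}, the marginal contribution v(S∪{β})−v(S) is either 0 or 1, likewise for α, and (b) whenever v(S∪{β})−v(S)=1 for S ⊆ N\{β}, then v(η⁻¹(S)∪{α})−v(η⁻¹(S))=1. Then the Shapley value of β is at most that of α. If moreover there exists T ⊆ N\{α} with v(T∪{α})−v(T)=1 but v(η(T)∪{β})−v(η(T))≠1, then the inequality is strict. -/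
open Finset

variable {N : Type*} [Fintype N] [DecidableEq N]

/-- The set of players preceding `i` in the ordering `π` of the players. -/
def preds (π : Fin (Fintype.card N) ≃ N) (i : N) : Finset N :=
  Finset.univ.filter (fun j => π.symm j < π.symm i)

/-- The Shapley value of player `i` in the game `v`: the average over all orderings
of the players of the marginal contribution of `i`. -/
noncomputable def shapley (v : Finset N → ℝ) (i : N) : ℝ :=
  (∑ π : Fin (Fintype.card N) ≃ N, (v (insert i (preds π i)) - v (preds π i))) /
    (Nat.factorial (Fintype.card N))

/-- The Shapley coefficient `c(j,m) = j!(m−j−1)!/m!`. -/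
noncomputable def shapCoef (j m : ℕ) : ℝ :=
  (Nat.factorial j * Nat.factorial (m - j - 1) : ℝ) / (Nat.factorial m : ℝ)

/-- The Shapley value of `i` written as a sum over coalitions `S ⊆ N \ {i}`. -/
noncomputable def shapleySum (v : Finset N → ℝ) (i : N) : ℝ :=
  ∑ S ∈ (Finset.univ.erase i).powerset,
    shapCoef S.card (Fintype.card N) * (v (insert i S) - v S)

/-! Relabel the orderings by `ζ = η⁻¹ ∘ swap β (η α)`, which sends `β` to `α` and agrees with `η⁻¹` on
every coalition to which `β` contributes: such a coalition avoids `η α`, because `α` contributes to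
its `η⁻¹`-image. So in every ordering the marginal contribution of `β` is at most that of `α` in the
relabelled ordering, and averaging over orderings gives the inequality. The witness `T` is the set
of predecessors of `α` in some relabelled ordering, where the inequality is strict. -/

omit [Fintype N] in
def marginal (v : Finset N → ℝ) (i : N) (S : Finset N) : ℝ :=
  v (insert i S) - v S

omit [Fintype N] in
lemma marginal_eq_zero_of_mem {v : Finset N → ℝ} {i : N} {S : Finset N} (h : i ∈ S) :
    marginal v i S = 0 := by
  simp [marginal, insert_eq_of_mem h]

omit [DecidableEq N] in
lemma notMem_preds (π : Fin (Fintype.card N) ≃ N) (i : N) : i ∉ preds π i := by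
  simp [preds]

lemma preds_trans (π : Fin (Fintype.card N) ≃ N) (ζ : Equiv.Perm N) (i : N) :
    preds (π.trans ζ) (ζ i) = (preds π i).image ζ := by
  ext j
  simp only [preds, mem_filter, mem_univ, true_and, mem_image, Equiv.symm_trans_apply,
    Equiv.symm_apply_apply]
  exact ⟨fun h => ⟨ζ.symm j, h, ζ.apply_symm_apply j⟩, by rintro ⟨a, ha, rfl⟩; simpa using ha⟩

lemma exists_preds_eq {i : N} {S : Finset N} (hiS : i ∉ S) :
    ∃ π : Fin (Fintype.card N) ≃ N, preds π i = S := by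
  let rank : N → ℕ := fun j => if j ∈ S then 0 else if j = i then 1 else 2
  let key : N → ℕ ×ₗ Fin (Fintype.card N) := fun j => toLex (rank j, Fintype.equivFin N j)
  have key_injective : Function.Injective key := fun x y h =>
    (Fintype.equivFin N).injective (congrArg (·.2) (toLex.injective h))
  let _ : LinearOrder N := LinearOrder.lift' key key_injective
  let o := Fintype.orderIsoFinOfCardEq N rfl
  refine ⟨o.toEquiv, ?_⟩
  ext j
  simp only [preds, mem_filter, mem_univ, true_and]
  change o.symm j < o.symm i ↔ j ∈ S
  rw [o.symm.lt_iff_lt]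
  change key j < key i ↔ j ∈ S
  simp only [key, Prod.Lex.toLex_lt_toLex, rank, hiS, if_false, if_true]
  split_ifs <;> simp_all

lemma shapley_eq_sum_marginal (v : Finset N → ℝ) (i : N) :
    shapley v i = (∑ π, marginal v i (preds π i)) / (Fintype.card N).factorial :=
  rfl

lemma sum_marginal_image_preds (v : Finset N → ℝ) (ζ : Equiv.Perm N) (i : N) :
    ∑ π, marginal v (ζ i) ((preds π i).image ζ) = ∑ π, marginal v (ζ i) (preds π (ζ i)) := by
  simp_rw [← preds_trans]
  exact Equiv.sum_comp (Equiv.equivCongr (Equiv.refl _) ζ) fun π => marginal v (ζ i) (preds π (ζ i))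

section Relabel

variable {v : Finset N → ℝ} {ζ : Equiv.Perm N} {α β : N}

theorem shapley_le_of_marginal_le (hζ : ζ β = α)
    (hle : ∀ S, β ∉ S → marginal v β S ≤ marginal v α (S.image ζ)) :
    shapley v β ≤ shapley v α := by
  subst hζ
  rw [shapley_eq_sum_marginal, shapley_eq_sum_marginal, ← sum_marginal_image_preds]
  gcongr with π
  exact hle _ (notMem_preds π β)

theorem shapley_lt_of_marginal_lt (hζ : ζ β = α)
    (hle : ∀ S, β ∉ S → marginal v β S ≤ marginal v α (S.image ζ))
    (hlt : ∃ S, β ∉ S ∧ marginal v β S < marginal v α (S.image ζ)) :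
    shapley v β < shapley v α := by
  subst hζ
  obtain ⟨S, hβS, hS⟩ := hlt
  obtain ⟨π₀, rfl⟩ := exists_preds_eq hβS
  rw [shapley_eq_sum_marginal, shapley_eq_sum_marginal, ← sum_marginal_image_preds]
  exact div_lt_div_of_pos_right
    (sum_lt_sum (fun π _ => hle _ (notMem_preds π β)) ⟨π₀, mem_univ _, hS⟩) (by positivity)

end Relabel

omit [Fintype N] in
lemma image_swap_trans_eq {ρ : Equiv.Perm N} {a b : N} {S : Finset N} (ha : a ∉ S) (hb : b ∉ S) :
    S.image ((Equiv.swap a b).trans ρ) = S.image ρ :=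
  image_congr fun x hx => by
    simp [Equiv.swap_apply_of_ne_of_ne (ne_of_mem_of_not_mem hx ha) (ne_of_mem_of_not_mem hx hb)]

section Dominance

variable {v : Finset N → ℝ} {η : Equiv.Perm N} {α β : N}

omit [Fintype N] in
def relabel (η : Equiv.Perm N) (α β : N) : Equiv.Perm N :=
  (Equiv.swap β (η α)).trans η.symm

omit [Fintype N] in
lemma relabel_apply_self : relabel η α β β = α := by
  simp [relabel]

omit [Fintype N] in
lemma image_relabel_of_marginal_eq_one
    (hdom : ∀ S, β ∉ S → marginal v β S = 1 → marginal v α (S.image η.symm) = 1)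
    {S : Finset N} (hβS : β ∉ S) (h1 : marginal v β S = 1) :
    S.image (relabel η α β) = S.image η.symm := by
  have hαS : α ∉ S.image η.symm := fun h =>
    zero_ne_one ((marginal_eq_zero_of_mem h).symm.trans (hdom S hβS h1))
  have hηα : η α ∉ S := fun h => hαS (by simpa using mem_image_of_mem η.symm h)
  exact image_swap_trans_eq hβS hηα

omit [Fintype N] in
lemma marginal_le_marginal_image_relabel
    (h01β : ∀ S, β ∉ S → marginal v β S = 0 ∨ marginal v β S = 1)
    (hα : ∀ S, α ∉ S → 0 ≤ marginal v α S)
    (hdom : ∀ S, β ∉ S → marginal v β S = 1 → marginal v α (S.image η.symm) = 1)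
    {S : Finset N} (hβS : β ∉ S) :
    marginal v β S ≤ marginal v α (S.image (relabel η α β)) := by
  rcases h01β S hβS with h0 | h1
  · rw [h0]
    refine hα _ fun hmem => ?_
    obtain ⟨x, hx, hxα⟩ := mem_image.1 hmem
    exact hβS ((relabel η α β).injective (hxα.trans relabel_apply_self.symm) ▸ hx)
  · rw [image_relabel_of_marginal_eq_one hdom hβS h1, h1, hdom S hβS h1]

omit [Fintype N] in
lemma exists_marginal_lt_marginal_image_relabel
    (h01β : ∀ S, β ∉ S → marginal v β S = 0 ∨ marginal v β S = 1)
    (hdom : ∀ S, β ∉ S → marginal v β S = 1 → marginal v α (S.image η.symm) = 1)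
    {T : Finset N} (hαT : α ∉ T) (hT : marginal v α T = 1) (hβT : marginal v β (T.image η) ≠ 1) :
    ∃ S, β ∉ S ∧ marginal v β S < marginal v α (S.image (relabel η α β)) := by
  set ζ := relabel η α β
  have hβS : β ∉ T.image ζ.symm := by
    simpa [Equiv.symm_apply_eq, ζ, relabel_apply_self] using hαT
  have hζS : (T.image ζ.symm).image ζ = T := by simp [image_image]
  refine ⟨T.image ζ.symm, hβS, ?_⟩
  rw [hζS, hT]
  rcases h01β _ hβS with h0 | h1
  · exact h0 ▸ one_pos
  · have hηT : T.image η = T.image ζ.symm := by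
      conv_lhs => rw [← hζS, image_relabel_of_marginal_eq_one hdom hβS h1, image_image,
        Equiv.self_comp_symm, image_id]
    exact absurd (hηT ▸ h1) hβT

end Dominance

theorem shapley_dominance_general (v : Finset N → ℝ) (η : Equiv.Perm N)
    (α β : N)
    (h01β : ∀ S : Finset N, S ⊆ Finset.univ.erase β →
      v (insert β S) - v S = 0 ∨ v (insert β S) - v S = 1)
    (h01α : ∀ S : Finset N, S ⊆ Finset.univ.erase α →
      v (insert α S) - v S = 0 ∨ v (insert α S) - v S = 1)
    (hdom : ∀ S : Finset N, S ⊆ Finset.univ.erase β → v (insert β S) - v S = 1 →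
      v (insert α (S.image ⇑η.symm)) - v (S.image ⇑η.symm) = 1) :
    shapley v β ≤ shapley v α ∧
      ((∃ T : Finset N, T ⊆ Finset.univ.erase α ∧ v (insert α T) - v T = 1 ∧
          v (insert β (T.image ⇑η)) - v (T.image ⇑η) ≠ 1) →
        shapley v β < shapley v α) := by
  have hsub {i : N} {S : Finset N} (h : i ∉ S) : S ⊆ univ.erase i :=
    subset_erase.2 ⟨subset_univ S, h⟩
  have h01β' (S : Finset N) (hβS : β ∉ S) : marginal v β S = 0 ∨ marginal v β S = 1 :=
    h01β S (hsub hβS)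
  have hdom' (S : Finset N) (hβS : β ∉ S) (h1 : marginal v β S = 1) :
      marginal v α (S.image η.symm) = 1 :=
    hdom S (hsub hβS) h1
  have hα (S : Finset N) (hαS : α ∉ S) : 0 ≤ marginal v α S := by
    rcases h01α S (hsub hαS) with h | h <;> simp [marginal, h]
  have hle (S : Finset N) (hβS : β ∉ S) :=
    marginal_le_marginal_image_relabel h01β' hα hdom' hβS
  refine ⟨shapley_le_of_marginal_le relabel_apply_self hle, ?_⟩
  rintro ⟨T, hT, hαT, hβT⟩
  exact shapley_lt_of_marginal_lt relabel_apply_self hle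
    (exists_marginal_lt_marginal_image_relabel h01β' hdom' (subset_erase.1 hT).2 hαT hβT)

/-- If the marginal contributions of `α` and `β` are 0/1-valued, and every coalition
where `β` contributes 1 maps via `η⁻¹` (where `η` is a permutation with `η β = α`)
to a coalition where `α` contributes 1, then `Sh(β) ≤ Sh(α)`; strictly so when some
coalition witnesses `α` contributing 1 but the corresponding coalition for `β` not. -/
theorem shapley_dominance (v : Finset N → ℝ) (hv : v ∅ = 0) (η : Equiv.Perm N)
    (α β : N) (hηβ : η β = α)
    (h01β : ∀ S : Finset N, S ⊆ Finset.univ.erase β →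
      v (insert β S) - v S = 0 ∨ v (insert β S) - v S = 1)
    (h01α : ∀ S : Finset N, S ⊆ Finset.univ.erase α →
      v (insert α S) - v S = 0 ∨ v (insert α S) - v S = 1)
    (hdom : ∀ S : Finset N, S ⊆ Finset.univ.erase β → v (insert β S) - v S = 1 →
      v (insert α (S.image ⇑η.symm)) - v (S.image ⇑η.symm) = 1) :
    shapley v β ≤ shapley v α ∧
      ((∃ T : Finset N, T ⊆ Finset.univ.erase α ∧ v (insert α T) - v T = 1 ∧
          v (insert β (T.image ⇑η)) - v (T.image ⇑η) ≠ 1) →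
        shapley v β < shapley v α) :=
  shapley_dominance_general v η α β h01β h01α hdom
end
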